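/- With D₀ the inductive limit operator on 𝒟 = ⋃_j I_j(Dom D_j) defined by D₀(I_jξ) = I_j(D_jξ) from a countable inductive system of densely defined self-adjoint operators D_j, the ranges of D₀ + i·id and D₀ − i·id, i.e. the sets {D₀x + ix : x ∈ 𝒟} and {D₀x − ix : x ∈ 𝒟}, are both dense in H. -/

import Mathlib

/-!
For a self-adjoint `T` and non-real `c`, a vector `y` orthogonal to the range of `T + c` satisfies
`⟪y, T x⟫ = ⟪-c̄ y, x⟫` on the domain, so `y ∈ dom T† = dom T` with `T y = -c̄ y`; as a symmetric
operator has only real eigenvalues, `y = 0`, and the range of `T + c` is dense. For the inductive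
limit, `J_j` maps the dense range of `D_j + c` into the range of `D₀ + c`, so the closure of the
latter contains every `J_j(H_j)`, whose union is dense.
-/

open scoped InnerProductSpace ComplexConjugate

open Set in
theorem Dense.of_image_subset_of_dense_iUnion_range {X ι : Type*} [TopologicalSpace X]
    {Y : ι → Type*} [∀ i, TopologicalSpace (Y i)] {f : ∀ i, Y i → X}
    (hf : ∀ i, Continuous (f i)) (hrange : Dense (⋃ i, range (f i)))
    {A : ∀ i, Set (Y i)} (hA : ∀ i, Dense (A i)) {S : Set X} (hAS : ∀ i, f i '' A i ⊆ S) :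
    Dense S := by
  have hsub : (⋃ i, range (f i)) ⊆ closure S := iUnion_subset fun i => by
    rw [← image_univ, ← (hA i).closure_eq]
    exact (image_closure_subset_closure_image (hf i)).trans (closure_mono (hAS i))
  simpa only [dense_closure] using hrange.mono hsub

namespace LinearPMap

variable {E : Type*} [NormedAddCommGroup E] [InnerProductSpace ℂ E] {T : E →ₗ.[ℂ] E}

theorem IsFormalAdjoint.eq_zero_of_apply_eq_smul (hT : T.IsFormalAdjoint T) {μ : ℂ}
    (hμ : conj μ ≠ μ) {x : T.domain} (hx : T x = μ • (x : E)) : (x : E) = 0 := by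
  have hsymm := hT x x
  rw [hx, inner_smul_left, inner_smul_right] at hsymm
  have hfac : (conj μ - μ) * ⟪(x : E), x⟫_ℂ = 0 := by linear_combination hsymm
  exact inner_self_eq_zero.mp ((mul_eq_zero.mp hfac).resolve_left (sub_ne_zero.mpr hμ))

variable [CompleteSpace E]

theorem exists_adjoint_apply_eq_smul_of_inner_add_smul_eq_zero
    (hT : Dense (T.domain : Set E)) {c : ℂ} {y : E}
    (hy : ∀ x : T.domain, ⟪T x + c • (x : E), y⟫_ℂ = 0) :
    ∃ hy' : y ∈ T†.domain, T† ⟨y, hy'⟩ = -conj c • y := by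
  have hw : ∀ x : T.domain, ⟪-conj c • y, (x : E)⟫_ℂ = ⟪y, T x⟫_ℂ := fun x => by
    have h := congrArg conj (hy x)
    rw [inner_add_left, inner_smul_left, _root_.map_add, _root_.map_mul, inner_conj_symm,
      inner_conj_symm, Complex.conj_conj, _root_.map_zero] at h
    rw [inner_smul_left, _root_.map_neg, Complex.conj_conj]
    linear_combination -h
  have hy' : y ∈ T†.domain := mem_adjoint_domain_of_exists y ⟨_, hw⟩
  exact ⟨hy', adjoint_apply_eq hT ⟨y, hy'⟩ hw⟩

theorem _root_.IsSelfAdjoint.dense_setOf_add_smul (hT : IsSelfAdjoint T) {c : ℂ}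
    (hc : conj c ≠ c) : Dense {y : E | ∃ x : T.domain, y = T x + c • (x : E)} := by
  set K : Submodule ℂ E := LinearMap.range (T.toFun + c • T.domain.subtype)
  have hK : {y : E | ∃ x : T.domain, y = T x + c • (x : E)} = K := by
    ext y
    exact ⟨fun ⟨x, hx⟩ => ⟨x, hx.symm⟩, fun ⟨x, hx⟩ => ⟨x, hx.symm⟩⟩
  rw [hK, Submodule.dense_iff_topologicalClosure_eq_top, Submodule.topologicalClosure_eq_top_iff,
    Submodule.eq_bot_iff]
  intro y hy
  have hadj : T† = T := hT
  have hsymm : T.IsFormalAdjoint T := by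
    simpa only [hadj] using adjoint_isFormalAdjoint (T := T) hT.dense_domain
  have heigen := exists_adjoint_apply_eq_smul_of_inner_add_smul_eq_zero hT.dense_domain
    fun x => (Submodule.mem_orthogonal K y).1 hy _ ⟨x, rfl⟩
  rw [hadj] at heigen
  obtain ⟨hyT, hTy⟩ := heigen
  refine hsymm.eq_zero_of_apply_eq_smul (x := ⟨y, hyT⟩) ?_ hTy
  rwa [_root_.map_neg, Complex.conj_conj, ne_eq, neg_inj, eq_comm]

end LinearPMap

theorem stmt1_general
    (H : ℕ → Type*) [∀ j, NormedAddCommGroup (H j)] [∀ j, InnerProductSpace ℂ (H j)]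
    [∀ j, CompleteSpace (H j)]
    (Hlim : Type*) [NormedAddCommGroup Hlim] [InnerProductSpace ℂ Hlim]
    (J : ∀ j : ℕ, H j →ₗᵢ[ℂ] Hlim)
    (hdense : Dense (⋃ j, Set.range (J j)))
    (D : ∀ j, H j →ₗ.[ℂ] H j)
    (hDsa : ∀ j, IsSelfAdjoint (D j))
    (D₀ : Hlim →ₗ.[ℂ] Hlim)
    (hdom : (D₀.domain : Set Hlim) = ⋃ j, (J j) '' ((D j).domain : Set (H j)))
    (hact : ∀ (j : ℕ) (ξ : (D j).domain) (h : J j ξ ∈ D₀.domain), D₀ ⟨J j ξ, h⟩ = J j ((D j) ξ))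
    :
    Dense {y : Hlim | ∃ x : D₀.domain, y = D₀ x + Complex.I • (x : Hlim)} ∧
    Dense {y : Hlim | ∃ x : D₀.domain, y = D₀ x - Complex.I • (x : Hlim)} := by
  have dense_add_smul : ∀ c : ℂ, conj c ≠ c →
      Dense {y : Hlim | ∃ x : D₀.domain, y = D₀ x + c • (x : Hlim)} := fun c hc =>
    Dense.of_image_subset_of_dense_iUnion_range (fun j => (J j).continuous) hdense
      (fun j => (hDsa j).dense_setOf_add_smul hc) fun j => by
        rintro _ ⟨_, ⟨ξ, rfl⟩, rfl⟩
        have hξ : J j ξ ∈ D₀.domain := by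
          rw [← SetLike.mem_coe, hdom]
          exact Set.mem_iUnion.mpr ⟨j, ξ, ξ.2, rfl⟩
        exact ⟨⟨J j ξ, hξ⟩, by rw [hact j ξ hξ, map_add, map_smul]⟩
  refine ⟨dense_add_smul Complex.I (by norm_num [Complex.ext_iff]), ?_⟩
  simpa only [neg_smul, ← sub_eq_add_neg] using dense_add_smul (-Complex.I) (by norm_num [Complex.ext_iff])

/-- The ranges of `D₀ + i` and `D₀ - i` are dense in `H`. -/
theorem stmt1
    (H : ℕ → Type*) [∀ j, NormedAddCommGroup (H j)] [∀ j, InnerProductSpace ℂ (H j)]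
    [∀ j, CompleteSpace (H j)]
    (Hlim : Type*) [NormedAddCommGroup Hlim] [InnerProductSpace ℂ Hlim] [CompleteSpace Hlim]
    (I : ∀ j k : ℕ, j ≤ k → H j →ₗᵢ[ℂ] H k) (J : ∀ j : ℕ, H j →ₗᵢ[ℂ] Hlim)
    (hI : ∀ (j k l : ℕ) (hjk : j ≤ k) (hkl : k ≤ l) (ξ : H j),
      I k l hkl (I j k hjk ξ) = I j l (hjk.trans hkl) ξ)
    (hJ : ∀ (j k : ℕ) (hjk : j ≤ k) (ξ : H j), J k (I j k hjk ξ) = J j ξ)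
    (hdense : Dense (⋃ j, Set.range (J j)))
    (D : ∀ j, H j →ₗ.[ℂ] H j)
    (hDdense : ∀ j, Dense ((D j).domain : Set (H j)))
    (hDsa : ∀ j, IsSelfAdjoint (D j))
    (hDcompat : ∀ (j k : ℕ) (hjk : j ≤ k) (ξ : (D j).domain),
      ∃ h : I j k hjk ξ ∈ (D k).domain, (D k) ⟨I j k hjk ξ, h⟩ = I j k hjk ((D j) ξ))
    (D₀ : Hlim →ₗ.[ℂ] Hlim)
    (hdom : (D₀.domain : Set Hlim) = ⋃ j, (J j) '' ((D j).domain : Set (H j)))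
    (hact : ∀ (j : ℕ) (ξ : (D j).domain) (h : J j ξ ∈ D₀.domain), D₀ ⟨J j ξ, h⟩ = J j ((D j) ξ))
    :
    Dense {y : Hlim | ∃ x : D₀.domain, y = D₀ x + Complex.I • (x : Hlim)} ∧
    Dense {y : Hlim | ∃ x : D₀.domain, y = D₀ x - Complex.I • (x : Hlim)} :=
  stmt1_general H Hlim J hdense D hDsa D₀ hdom hact
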